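/- arXiv:1712.04889 — 2 statements merged into one kernel-verified Lean document; each statement's English description precedes it below -/
import Mathlib

section
/- For each N∈ℕ let λ₁^{(N)} ≥ ⋯ ≥ λ_N^{(N)} be real random variables on some probability space and let μ_N := N^{−1}Σ_{k=1}^N δ_{λ_k^{(N)}}, with Stieltjes transform m_{μ_N}(z) := N^{−1}Σ_k (λ_k^{(N)} − z)^{−1}. Let ν be a compactly supported probability measure on ℝ with Stieltjes transform m_ν(z) := ∫(x−z)^{−1}ν(dx). Assume: (i) there are deterministic numbers λ̂₁^{(N)} such that for every ε>0, P(|λ₁^{(N)} − λ̂₁^{(N)}| > N^{ε−1/2}) → 0 as N→∞; (ii) there is C>0 such that Im m_ν(x+iη) ≤ Cη/√(κ+η) for all x∈ℝ and η>0, where κ := dist(x, supp ν); (iii) there exist γ,δ,ε>0 and a sequence ε_N→0 such that |E[m_{μ_N}(z)] − m_ν(z)| ≤ ε_N N^{−1/2−γ} for all z=E+iη with dist(E, supp ν) ≥ N^{−ε} and η ≥ N^{−1/2−δ}. Then there exists ε'>0 such that P( dist(λ₁^{(N)}, supp ν) > N^{−ε'} ) → 0 as N→∞. -/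
/-!
Let `θ ≫ N^{-1/2}` be a window around `λ̂₁` in which `λ₁` lies with high probability,
`η ≪ N^{-1/2}` a spectral resolution and `ρ = N^{-ε'} ≫ θ`. If a single sample has `λ₁` in the
window but at distance `> ρ` from `supp ν`, the whole window is at distance `≥ ρ/2` from the
support. Cover the window by `O(θ/η)` points `E` of mesh `η`: whenever `λ₁` is in the window,
`Im m_{μ_N}(E + iη) ≥ (2Nη)⁻¹` at one of them, while by Markov's inequality, the averaged law and
the square-root bound each such event has probability `O(Nη (η ρ^{-1/2} + ε_N N^{-1/2-γ}))`.
With `θ = N^{a/4-1/2}`, `η = N^{-1/2-a}`, `ρ = N^{-a/2}` the union bound is `O(N^{-a/2} + ε_N)`,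
so either the window has vanishing probability or no sample is far from the support; in both
cases `P(dist(λ₁, supp ν) > ρ) ≤ o(1) + P(|λ₁ - λ̂₁| > θ) → 0`.
-/

open MeasureTheory Filter Topology

/-- Topological support of a measure on `ℝ`. -/
def measSupport (ν : Measure ℝ) : Set ℝ := {x | ∀ U ∈ nhds x, 0 < ν U}

noncomputable def empiricalStieltjes {n : ℕ} (x : Fin n → ℝ) (z : ℂ) : ℂ :=
  (n : ℂ)⁻¹ * ∑ k, ((x k : ℂ) - z)⁻¹

lemma Complex.im_inv_ofReal_sub (t E η : ℝ) :
    ((t : ℂ) - (E + η * Complex.I))⁻¹.im = η / ((t - E) ^ 2 + η ^ 2) := by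
  simp only [inv_im, sub_im, ofReal_im, add_im, mul_im, ofReal_re, I_im, mul_one, I_re, mul_zero,
    add_zero, zero_add, zero_sub, neg_neg, normSq_apply, sub_re, add_re, mul_re, sub_self, mul_neg,
    neg_mul]
  ring

section empiricalStieltjes

variable {n : ℕ} (x : Fin n → ℝ)

lemma empiricalStieltjes_im (E η : ℝ) :
    (empiricalStieltjes x (E + η * Complex.I)).im =
      (n : ℝ)⁻¹ * ∑ k, η / ((x k - E) ^ 2 + η ^ 2) := by
  rw [empiricalStieltjes, ← Complex.ofReal_natCast, ← Complex.ofReal_inv, Complex.im_ofReal_mul,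
    Complex.im_sum]
  simp only [Complex.im_inv_ofReal_sub]

lemma empiricalStieltjes_im_nonneg {E η : ℝ} (hη : 0 ≤ η) :
    0 ≤ (empiricalStieltjes x (E + η * Complex.I)).im := by
  rw [empiricalStieltjes_im]
  positivity

lemma norm_empiricalStieltjes_le {z : ℂ} (hz : 0 < z.im) :
    ‖empiricalStieltjes x z‖ ≤ z.im⁻¹ := by
  have hterm (k : Fin n) : ‖((x k : ℂ) - z)⁻¹‖ ≤ z.im⁻¹ := by
    rw [norm_inv]
    refine inv_anti₀ hz ?_
    simpa [abs_of_pos hz] using Complex.abs_im_le_norm ((x k : ℂ) - z)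
  calc ‖empiricalStieltjes x z‖ ≤ (n : ℝ)⁻¹ * ∑ _k : Fin n, z.im⁻¹ := by
        rw [empiricalStieltjes, norm_mul, norm_inv, Complex.norm_natCast]
        gcongr
        exact (norm_sum_le _ _).trans (Finset.sum_le_sum fun k _ => hterm k)
    _ ≤ z.im⁻¹ := by
        rw [Finset.sum_const, Finset.card_univ, Fintype.card_fin, nsmul_eq_mul, ← mul_assoc]
        rcases n.eq_zero_or_pos with rfl | hn
        · simp [hz.le]
        · rw [inv_mul_cancel₀ (by positivity), one_mul]

lemma inv_le_empiricalStieltjes_im {E η : ℝ} (hη : 0 < η) (i : Fin n) (hi : |x i - E| ≤ η) :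
    (2 * n * η)⁻¹ ≤ (empiricalStieltjes x (E + η * Complex.I)).im := by
  have hsq : (x i - E) ^ 2 ≤ η ^ 2 := sq_le_sq' (neg_le_of_abs_le hi) (le_of_abs_le hi)
  have hi' : η / (2 * η ^ 2) ≤ η / ((x i - E) ^ 2 + η ^ 2) := by gcongr; linarith
  have hsum : η / (2 * η ^ 2) ≤ ∑ k, η / ((x k - E) ^ 2 + η ^ 2) :=
    hi'.trans (Finset.single_le_sum (f := fun k => η / ((x k - E) ^ 2 + η ^ 2))
      (fun k _ => by positivity) (Finset.mem_univ i))
  have hn : (0 : ℝ) < n := by exact_mod_cast i.pos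
  calc (2 * n * η)⁻¹ = (n : ℝ)⁻¹ * (η / (2 * η ^ 2)) := by field_simp
    _ ≤ _ := by rw [empiricalStieltjes_im]; gcongr

lemma measurable_empiricalStieltjes {Ω : Type*} [MeasurableSpace Ω] {x : Fin n → Ω → ℝ}
    (hx : ∀ k, Measurable (x k)) (z : ℂ) :
    Measurable fun ω => empiricalStieltjes (fun k => x k ω) z :=
  measurable_const.mul <| Finset.measurable_sum _ fun k _ =>
    ((Complex.measurable_ofReal.comp (hx k)).sub measurable_const).inv

end empiricalStieltjes

lemma exists_abs_sub_grid_le {c θ η y : ℝ} (hη : 0 < η) (hy : |y - c| ≤ θ) :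
    ∃ j ∈ Finset.range (⌊2 * θ / η⌋₊ + 1), |y - (c - θ + j * η)| ≤ η := by
  obtain ⟨hy₁, hy₂⟩ := abs_le.mp hy
  have h₀ : 0 ≤ (y - c + θ) / η := div_nonneg (by linarith) hη.le
  refine ⟨⌊(y - c + θ) / η⌋₊, Finset.mem_range_succ_iff.mpr
    (Nat.floor_le_floor (by gcongr; linarith)), abs_le.mpr ⟨?_, ?_⟩⟩
  · have := Nat.floor_le h₀
    rw [le_div_iff₀ hη] at this
    linarith
  · have := Nat.lt_floor_add_one ((y - c + θ) / η)
    rw [div_lt_iff₀ hη] at this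
    linarith

lemma abs_grid_sub_le {c θ η : ℝ} (hθ : 0 ≤ θ) (hη : 0 < η) {j : ℕ}
    (hj : j ∈ Finset.range (⌊2 * θ / η⌋₊ + 1)) : |c - θ + j * η - c| ≤ θ := by
  have : (j : ℝ) * η ≤ 2 * θ := by
    rw [← le_div_iff₀ hη]
    exact (Nat.cast_le.mpr (Finset.mem_range_succ_iff.mp hj)).trans (Nat.floor_le (by positivity))
  rw [abs_le]
  constructor <;> nlinarith [(by positivity : (0 : ℝ) ≤ j * η)]

section RandomPoints

variable {Ω : Type*} [MeasurableSpace Ω] {P : Measure Ω} [IsFiniteMeasure P] {n : ℕ}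
  {x : Fin n → Ω → ℝ}

lemma mul_measureReal_le_im_integral_empiricalStieltjes (hx : ∀ k, Measurable (x k)) {E η : ℝ}
    (hη : 0 < η) (t : ℝ) :
    t * P.real {ω | t ≤ (empiricalStieltjes (fun k => x k ω) (E + η * Complex.I)).im} ≤
      (∫ ω, empiricalStieltjes (fun k => x k ω) (E + η * Complex.I) ∂P).im := by
  have hint : Integrable (fun ω => empiricalStieltjes (fun k => x k ω) (E + η * Complex.I)) P :=
    .of_bound (measurable_empiricalStieltjes hx _).aestronglyMeasurable η⁻¹ <|
      .of_forall fun ω => by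
        simpa using norm_empiricalStieltjes_le (fun k => x k ω) (z := E + η * Complex.I) (by simpa)
  exact (mul_meas_ge_le_integral_of_nonneg
    (.of_forall fun ω => empiricalStieltjes_im_nonneg _ hη.le) hint.im t).trans_eq
    (integral_im hint)

theorem measureReal_abs_sub_le_le_of_im_integral_le (hx : ∀ k, Measurable (x k)) (i : Fin n)
    {c θ η β : ℝ} (hθ : 0 ≤ θ) (hη : 0 < η)
    (hβ : ∀ E : ℝ, |E - c| ≤ θ →
      (∫ ω, empiricalStieltjes (fun k => x k ω) (E + η * Complex.I) ∂P).im ≤ β) :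
    P.real {ω | |x i ω - c| ≤ θ} ≤ (2 * θ / η + 1) * (2 * n * η * β) := by
  set grid := Finset.range (⌊2 * θ / η⌋₊ + 1)
  set A : ℕ → Set Ω := fun j => {ω | (2 * n * η)⁻¹ ≤
    (empiricalStieltjes (fun k => x k ω) ((c - θ + j * η : ℝ) + η * Complex.I)).im}
  have hn : (0 : ℝ) < n := by exact_mod_cast i.pos
  have hcover : {ω | |x i ω - c| ≤ θ} ⊆ ⋃ j ∈ grid, A j := fun ω hω => by
    obtain ⟨j, hj, hclose⟩ := exists_abs_sub_grid_le hη hω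
    exact Set.mem_biUnion hj (inv_le_empiricalStieltjes_im _ hη i hclose)
  have hA (j : ℕ) (hj : j ∈ grid) : P.real (A j) ≤ 2 * n * η * β := by
    have := (mul_measureReal_le_im_integral_empiricalStieltjes hx hη (2 * n * η)⁻¹).trans
      (hβ _ (abs_grid_sub_le hθ hη hj))
    rwa [inv_mul_le_iff₀ (by positivity)] at this
  have hβ₀ : 0 ≤ 2 * n * η * β := measureReal_nonneg.trans (hA 0 (by simp [grid]))
  calc P.real {ω | |x i ω - c| ≤ θ} ≤ ∑ j ∈ grid, P.real (A j) :=
        (measureReal_mono hcover (measure_ne_top _ _)).trans (measureReal_biUnion_finset_le _ _)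
    _ ≤ ∑ _j ∈ grid, 2 * n * η * β := Finset.sum_le_sum hA
    _ ≤ (2 * θ / η + 1) * (2 * n * η * β) := by
        rw [Finset.sum_const, Finset.card_range, nsmul_eq_mul, Nat.cast_add_one]
        gcongr
        exact Nat.floor_le (by positivity)

theorem measure_lt_infDist_le (hx : ∀ k, Measurable (x k)) (i : Fin n) (S : Set ℝ)
    {c θ η ρ β : ℝ} (hθ : 0 ≤ θ) (hη : 0 < η) (hθρ : 4 * θ ≤ ρ)
    (hβ : ∀ E : ℝ, ρ / 2 ≤ Metric.infDist E S →
      (∫ ω, empiricalStieltjes (fun k => x k ω) (E + η * Complex.I) ∂P).im ≤ β) :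
    P {ω | ρ < Metric.infDist (x i ω) S} ≤
      ENNReal.ofReal ((2 * θ / η + 1) * (2 * n * η * β)) + P {ω | θ < |x i ω - c|} := by
  by_cases hbad : ∃ ω, ρ < Metric.infDist (x i ω) S ∧ |x i ω - c| ≤ θ
  · obtain ⟨ω₀, hfar, hnear⟩ := hbad
    have hE (E : ℝ) (hEc : |E - c| ≤ θ) : ρ / 2 ≤ Metric.infDist E S := by
      have := (Metric.infDist_le_infDist_add_dist (x := x i ω₀) (y := E) (s := S)).trans_lt' hfar
      rw [Real.dist_eq] at this
      linarith [abs_sub_le (x i ω₀) c E, abs_sub_comm E c]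
    have hwindow := measureReal_abs_sub_le_le_of_im_integral_le (P := P) hx i (c := c) hθ hη
      fun E h => hβ E (hE E h)
    calc P {ω | ρ < Metric.infDist (x i ω) S}
        ≤ P ({ω | |x i ω - c| ≤ θ} ∪ {ω | θ < |x i ω - c|}) :=
          measure_mono fun ω _ => le_or_gt |x i ω - c| θ
      _ ≤ P {ω | |x i ω - c| ≤ θ} + P {ω | θ < |x i ω - c|} := measure_union_le _ _
      _ ≤ _ := by
          gcongr
          rw [← ofReal_measureReal]
          exact ENNReal.ofReal_le_ofReal hwindow
  · push Not at hbad
    exact (measure_mono fun ω hω => hbad ω hω).trans le_add_self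

end RandomPoints

/-- The scales are the window `θ = s / u`, the resolution `η = s u⁴` and the distance `ρ = u²`. -/
theorem tendsto_measure_lt_infDist_of_scales {Ω : ℕ → Type*} [∀ N, MeasurableSpace (Ω N)]
    (P : ∀ N, Measure (Ω N)) [∀ N, IsFiniteMeasure (P N)] {d : ℕ → ℕ}
    (x : ∀ N, Fin (d N) → Ω N → ℝ) (hx : ∀ N k, Measurable (x N k)) (i : ∀ N, Fin (d N))
    (S : Set ℝ) (m : ℂ → ℂ) (c : ℕ → ℝ) {C : ℝ} (hC : 0 ≤ C) {u s r h w e : ℕ → ℝ}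
    (hu : Tendsto u atTop (𝓝 0)) (hu₀ : ∀ N, 0 < u N) (hs₀ : ∀ N, 0 < s N)
    (hds : ∀ N, d N * s N ^ 2 = 1) (hsu : ∀ᶠ N in atTop, 4 * s N ≤ u N ^ 3)
    (hconc : Tendsto (fun N => P N {ω | s N / u N < |x N (i N) ω - c N|}) atTop (𝓝 0))
    (hm : ∀ E η : ℝ, 0 < η → (m (E + η * Complex.I)).im ≤ C * η / √(Metric.infDist E S + η))
    (hloc : ∀ N, ∀ z : ℂ, r N ≤ Metric.infDist z.re S → h N ≤ z.im →
      ‖(∫ ω, empiricalStieltjes (fun k => x N k ω) z ∂P N) - m z‖ ≤ e N * w N)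
    (hr : ∀ᶠ N in atTop, 2 * r N ≤ u N ^ 2) (hh : ∀ N, h N ≤ s N * u N ^ 4)
    (hw : ∀ N, w N ≤ s N * u N) (hw₀ : ∀ N, 0 ≤ w N) (he : Tendsto e atTop (𝓝 0)) :
    Tendsto (fun N => P N {ω | u N ^ 2 < Metric.infDist (x N (i N) ω) S}) atTop (𝓝 0) := by
  have hbound : Tendsto (fun N => 2 * (2 + u N ^ 5) * (2 * C * u N ^ 2 + |e N|)) atTop (𝓝 0) := by
    simpa using ((tendsto_const_nhds.add (hu.pow 5)).const_mul 2).mul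
      ((hu.pow 2).const_mul (2 * C) |>.add he.abs)
  refine tendsto_of_tendsto_of_tendsto_of_le_of_le' tendsto_const_nhds
    (by simpa using (ENNReal.tendsto_ofReal hbound).add hconc) (.of_forall fun _ => zero_le) ?_
  filter_upwards [hsu, hr] with N hsu hr
  have hu₀ := hu₀ N
  have hs₀ := hs₀ N
  set η := s N * u N ^ 4 with hη
  have hβ (E : ℝ) (hE : u N ^ 2 / 2 ≤ Metric.infDist E S) :
      (∫ ω, empiricalStieltjes (fun k => x N k ω) (E + η * Complex.I) ∂P N).im ≤
        2 * C * s N * u N ^ 3 + |e N| * (s N * u N) := by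
    have hsqrt : u N / 2 ≤ √(Metric.infDist E S + η) :=
      (Real.le_sqrt' (by positivity)).mpr (by nlinarith [(by positivity : 0 ≤ η)])
    have hmE : (m (E + η * Complex.I)).im ≤ 2 * C * s N * u N ^ 3 :=
      calc _ ≤ C * η / √(Metric.infDist E S + η) := hm _ _ (by positivity)
        _ ≤ C * η / (u N / 2) := by gcongr
        _ = 2 * C * s N * u N ^ 3 := by rw [hη]; field_simp
    have hdiff := (Complex.im_le_norm _).trans <|
      (hloc N (E + η * Complex.I) (by simpa using (show r N ≤ Metric.infDist E S by linarith))
        (by simpa using hh N)).trans <|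
      (mul_le_mul_of_nonneg_right (le_abs_self _) (hw₀ N)).trans <|
      mul_le_mul_of_nonneg_left (hw N) (abs_nonneg _)
    rw [Complex.sub_im] at hdiff
    linarith
  refine (measure_lt_infDist_le (hx N) (i N) S (c := c N) (θ := s N / u N) (ρ := u N ^ 2)
    (by positivity) (by positivity) ?_ hβ).trans_eq ?_
  · rw [mul_div_assoc', div_le_iff₀ hu₀]
    linarith
  · congr 2
    rw [hη]
    field_simp
    linear_combination (2 * u N ^ 2 * C + |e N|) * hds N

lemma eventually_const_mul_rpow_le_rpow {p q : ℝ} (hpq : p < q) (K : ℝ) :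
    ∀ᶠ x : ℝ in atTop, K * x ^ p ≤ x ^ q := by
  filter_upwards [(tendsto_rpow_atTop (sub_pos.mpr hpq)).eventually_ge_atTop K,
    eventually_gt_atTop 0] with x hK hx
  calc K * x ^ p ≤ x ^ (q - p) * x ^ p := by gcongr
    _ = x ^ q := by rw [← Real.rpow_add hx, sub_add_cancel]

theorem eigenvalue_location_from_averaged_law_general
    (Ω : ℕ → Type) (mΩ : ∀ N, MeasurableSpace (Ω N)) (P : ∀ N, Measure (Ω N))
    (hP : ∀ N, IsProbabilityMeasure (P N))
    (lam : ∀ N, Fin N → Ω N → ℝ)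
    (hmeas : ∀ N k, Measurable (lam N k))
    (ν : Measure ℝ)
    (hatlam : ℕ → ℝ)
    (hconc : ∀ ε : ℝ, 0 < ε →
      Tendsto (fun N : ℕ =>
          P (N + 1) {ω | (((N + 1 : ℕ) : ℝ)) ^ (ε - 1 / 2) <
            |lam (N + 1) 0 ω - hatlam (N + 1)|})
        atTop (nhds 0))
    (C : ℝ) (hC : 0 < C)
    (hsqrt : ∀ x η : ℝ, 0 < η →
      (∫ t : ℝ, ((t : ℂ) - (x + η * Complex.I))⁻¹ ∂ν).im ≤
        C * η / Real.sqrt (Metric.infDist x (measSupport ν) + η))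
    (γ δ ε : ℝ) (hγ : 0 < γ) (hδ : 0 < δ) (hε : 0 < ε)
    (εseq : ℕ → ℝ) (hεseq : Tendsto εseq atTop (nhds 0))
    (hloc : ∀ N : ℕ, 1 ≤ N → ∀ z : ℂ,
      (N : ℝ) ^ (-ε) ≤ Metric.infDist z.re (measSupport ν) →
      (N : ℝ) ^ (-(1 : ℝ) / 2 - δ) ≤ z.im →
      ‖(∫ ω, (N : ℂ)⁻¹ * ∑ k : Fin N, ((lam N k ω : ℂ) - z)⁻¹ ∂(P N)) -
          ∫ t : ℝ, ((t : ℂ) - z)⁻¹ ∂ν‖ ≤ εseq N * (N : ℝ) ^ (-(1 : ℝ) / 2 - γ)) :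
    ∃ ε' : ℝ, 0 < ε' ∧
      Tendsto (fun N : ℕ =>
          P (N + 1) {ω | (((N + 1 : ℕ) : ℝ)) ^ (-ε') <
            Metric.infDist (lam (N + 1) 0 ω) (measSupport ν)})
        atTop (nhds 0) := by
  obtain ⟨a, ha, haε, haδ, haγ, ha2⟩ :
      ∃ a : ℝ, 0 < a ∧ a ≤ ε ∧ a ≤ δ ∧ a ≤ γ ∧ a ≤ 1 / 2 :=
    ⟨min (min ε δ) (min γ (1 / 2)), by positivity, by simp⟩
  set n : ℕ → ℝ := fun N => ((N + 1 : ℕ) : ℝ)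
  have hn : Tendsto n atTop atTop := tendsto_natCast_atTop_atTop.comp (tendsto_add_atTop_nat 1)
  have hn₁ (N : ℕ) : 1 ≤ n N := by simp [n]
  have hpow (N : ℕ) (y : ℝ) (k : ℕ) : (n N ^ y) ^ k = n N ^ (y * k) :=
    (Real.rpow_mul_natCast (by linarith [hn₁ N]) y k).symm
  have hmul (N : ℕ) (y z : ℝ) : n N ^ y * n N ^ z = n N ^ (y + z) :=
    (Real.rpow_add (by linarith [hn₁ N]) y z).symm
  have hscale {p : ℝ} (K : ℝ) (k : ℕ) (hpq : p < -(a / 4) * k) :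
      ∀ᶠ N in atTop, K * n N ^ p ≤ (n N ^ (-(a / 4))) ^ k := by
    simpa only [hpow] using hn.eventually (eventually_const_mul_rpow_le_rpow hpq K)
  have hds (N : ℕ) : ((N + 1 : ℕ) : ℝ) * (n N ^ (-(1 : ℝ) / 2)) ^ 2 = 1 := by
    rw [hpow, show -(1 : ℝ) / 2 * (2 : ℕ) = -1 by norm_num, Real.rpow_neg_one]
    exact mul_inv_cancel₀ (by positivity)
  have hdiv (N : ℕ) : n N ^ (-(1 : ℝ) / 2) / n N ^ (-(a / 4)) = n N ^ (a / 4 - 1 / 2) := by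
    rw [← Real.rpow_sub (by linarith [hn₁ N])]; ring_nf
  refine ⟨a / 2, by positivity, ?_⟩
  have hu2 (N : ℕ) : (n N ^ (-(a / 4))) ^ 2 = n N ^ (-(a / 2)) := by
    rw [hpow]; push_cast; ring_nf
  simpa only [hu2] using tendsto_measure_lt_infDist_of_scales (fun N => P (N + 1))
    (d := fun N => N + 1) (fun N => lam (N + 1)) (fun N => hmeas (N + 1)) (fun _ => 0)
    (measSupport ν) (fun z => ∫ t : ℝ, ((t : ℂ) - z)⁻¹ ∂ν) (fun N => hatlam (N + 1)) hC.le
    (u := fun N => n N ^ (-(a / 4))) (s := fun N => n N ^ (-(1 : ℝ) / 2))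
    ((tendsto_rpow_neg_atTop (by positivity)).comp hn) (fun N => by positivity)
    (fun N => by positivity) hds (hscale 4 3 (by push_cast; linarith))
    (by simpa only [hdiv] using hconc (a / 4) (by positivity)) hsqrt
    (fun N => hloc (N + 1) (by omega)) (hscale 2 2 (by push_cast; linarith))
    (fun N => by
      rw [hpow, hmul]; exact Real.rpow_le_rpow_of_exponent_le (hn₁ N) (by push_cast; linarith))
    (fun N => by rw [hmul]; exact Real.rpow_le_rpow_of_exponent_le (hn₁ N) (by linarith))
    (fun N => by positivity) (hεseq.comp (tendsto_add_atTop_nat 1))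

/-- If the largest point `λ₁` concentrates around a deterministic location,
the limiting Stieltjes transform has square-root edge behaviour, and the averaged empirical
Stieltjes transform converges at rate `o(N^{−1/2−γ})` outside the support, then `λ₁` lies
within `N^{−ε'}` of the support of `ν` with probability tending to one. -/
theorem eigenvalue_location_from_averaged_law
    (Ω : ℕ → Type) (mΩ : ∀ N, MeasurableSpace (Ω N)) (P : ∀ N, Measure (Ω N))
    (hP : ∀ N, IsProbabilityMeasure (P N))
    (lam : ∀ N, Fin N → Ω N → ℝ)
    (hmeas : ∀ N k, Measurable (lam N k))
    (hsort : ∀ N (ω : Ω N), Antitone fun k => lam N k ω)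
    (ν : Measure ℝ) (hν : IsProbabilityMeasure ν)
    (hcomp : IsCompact (measSupport ν))
    (hatlam : ℕ → ℝ)
    (hconc : ∀ ε : ℝ, 0 < ε →
      Tendsto (fun N : ℕ =>
          P (N + 1) {ω | (((N + 1 : ℕ) : ℝ)) ^ (ε - 1 / 2) <
            |lam (N + 1) 0 ω - hatlam (N + 1)|})
        atTop (nhds 0))
    (C : ℝ) (hC : 0 < C)
    (hsqrt : ∀ x η : ℝ, 0 < η →
      (∫ t : ℝ, ((t : ℂ) - (x + η * Complex.I))⁻¹ ∂ν).im ≤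
        C * η / Real.sqrt (Metric.infDist x (measSupport ν) + η))
    (γ δ ε : ℝ) (hγ : 0 < γ) (hδ : 0 < δ) (hε : 0 < ε)
    (εseq : ℕ → ℝ) (hεseq : Tendsto εseq atTop (nhds 0))
    (hloc : ∀ N : ℕ, 1 ≤ N → ∀ z : ℂ,
      (N : ℝ) ^ (-ε) ≤ Metric.infDist z.re (measSupport ν) →
      (N : ℝ) ^ (-(1 : ℝ) / 2 - δ) ≤ z.im →
      ‖(∫ ω, (N : ℂ)⁻¹ * ∑ k : Fin N, ((lam N k ω : ℂ) - z)⁻¹ ∂(P N)) -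
          ∫ t : ℝ, ((t : ℂ) - z)⁻¹ ∂ν‖ ≤ εseq N * (N : ℝ) ^ (-(1 : ℝ) / 2 - γ)) :
    ∃ ε' : ℝ, 0 < ε' ∧
      Tendsto (fun N : ℕ =>
          P (N + 1) {ω | (((N + 1 : ℕ) : ℝ)) ^ (-ε') <
            Metric.infDist (lam (N + 1) 0 ω) (measSupport ν)})
        atTop (nhds 0) :=
  eigenvalue_location_from_averaged_law_general Ω mΩ P hP lam hmeas ν hatlam hconc C hC hsqrt γ δ ε
    hγ hδ hε εseq hεseq hloc
end

section
/- Let δ>0. There exist k≥0 and a polynomial P in two variables with nonnegative coefficients, both depending only on δ, such that for every N∈ℕ, every B∈ℂ^{N×N} with ℓ²→ℓ² operator norm ‖B‖<1, and every n≥1: ‖Bⁿ‖₁ ≤ P(‖B‖_{2+δ}, (1−‖B‖)^{−1}) · n^k · ((1+‖B‖)/2)ⁿ. -/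
/-!
Fix indices `i, j` at distance `d` and let `S` be the band of `B` of width `t = d / n`, so that
`(Sⁿ)ᵢⱼ = 0` and `(Bⁿ)ᵢⱼ = (Bⁿ - Sⁿ)ᵢⱼ`. By the Schur test, the decay `M = ‖B‖_{2+δ}` gives
`‖B - S‖ ≤ K M / (1 + t)` with `K = ∑_{z ∈ ℤ} (1 + |z|)^{-(1+δ)}`. If this is at most
`(1 - ‖B‖) / 2`, then `B` and `S` both have norm at most `q = (1 + ‖B‖) / 2` and
`‖Bⁿ - Sⁿ‖ ≤ n ‖B - S‖ qⁿ⁻¹`, which absorbs the weight `1 + d ≤ n (1 + t)`. Otherwise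
`1 + t ≤ 2 K M / (1 - ‖B‖)`, so `d = O(n)` and the trivial bound `‖(Bⁿ)ᵢⱼ‖ ≤ ‖B‖ⁿ` suffices.
-/

/-- The weighted sup-norm `‖A‖_β := sup_{i,j} |A_{ij}| (1+|i−j|)^β`. -/
noncomputable def normDecay {N : ℕ} (β : ℝ) (A : Matrix (Fin N) (Fin N) ℂ) : ℝ :=
  Finset.fold max 0
    (fun p : Fin N × Fin N =>
      ‖A p.1 p.2‖ * (1 + |((p.1 : ℕ) : ℝ) - ((p.2 : ℕ) : ℝ)|) ^ β) Finset.univ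

/-- The `ℓ²→ℓ²` operator norm of a complex `N × N` matrix. -/
noncomputable def l2OpNorm {N : ℕ} (A : Matrix (Fin N) (Fin N) ℂ) : ℝ :=
  ‖LinearMap.toContinuousLinearMap (Matrix.toEuclideanLin A)‖

open scoped Matrix.Norms.L2Operator
open Finset

theorem norm_pow_succ_sub_pow_succ_le {R : Type*} [SeminormedRing R] {a b : R} {r : ℝ}
    (ha : ‖a‖ ≤ r) (hb : ‖b‖ ≤ r) (n : ℕ) :
    ‖a ^ (n + 1) - b ^ (n + 1)‖ ≤ (n + 1) * ‖a - b‖ * r ^ n := by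
  induction n with
  | zero => simp
  | succ n ih =>
    have hr : 0 ≤ r := (norm_nonneg a).trans ha
    have hbn : ‖b ^ (n + 1)‖ ≤ r ^ (n + 1) :=
      (norm_pow_le' b n.succ_pos).trans (pow_le_pow_left₀ (norm_nonneg b) hb _)
    calc ‖a ^ (n + 1 + 1) - b ^ (n + 1 + 1)‖
        = ‖a * (a ^ (n + 1) - b ^ (n + 1)) + (a - b) * b ^ (n + 1)‖ := by
          rw [pow_succ' a, pow_succ' b]; noncomm_ring
      _ ≤ ‖a‖ * ‖a ^ (n + 1) - b ^ (n + 1)‖ + ‖a - b‖ * ‖b ^ (n + 1)‖ :=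
          (norm_add_le _ _).trans (add_le_add (norm_mul_le _ _) (norm_mul_le _ _))
      _ ≤ r * ((n + 1) * ‖a - b‖ * r ^ n) + ‖a - b‖ * r ^ (n + 1) := by gcongr
      _ = (↑(n + 1) + 1) * ‖a - b‖ * r ^ (n + 1) := by push_cast; ring

namespace Matrix

variable {𝕜 m n : Type*} [RCLike 𝕜] [Fintype m] [Fintype n] [DecidableEq n]

theorem norm_entry_le_l2_opNorm (A : Matrix m n 𝕜) (i : m) (j : n) :
    ‖A i j‖ ≤ ‖A‖ := by
  have hcol : A *ᵥ Pi.single j 1 = fun i => A i j := by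
    ext i; simp
  calc ‖A i j‖ = ‖(EuclideanSpace.equiv m 𝕜).symm (A *ᵥ EuclideanSpace.single j 1) i‖ := by
        simp [hcol]
    _ ≤ ‖(EuclideanSpace.equiv m 𝕜).symm (A *ᵥ EuclideanSpace.single j 1)‖ :=
        PiLp.norm_apply_le _ i
    _ ≤ ‖A‖ := by simpa using A.l2_opNorm_mulVec (EuclideanSpace.single j 1)

/-- **Schur test** for the `ℓ²` operator norm. -/
theorem l2_opNorm_le_sqrt_of_sum_norm_le {r c : ℝ} (A : Matrix m n 𝕜)
    (hrow : ∀ i, ∑ j, ‖A i j‖ ≤ r) (hcol : ∀ j, ∑ i, ‖A i j‖ ≤ c) : ‖A‖ ≤ √(r * c) := by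
  rcases isEmpty_or_nonempty m with hm | hm
  · simp [Subsingleton.elim A 0]
  have hr : 0 ≤ r := (sum_nonneg fun _ _ => norm_nonneg _).trans (hrow hm.some)
  rw [l2_opNorm_def]
  refine ContinuousLinearMap.opNorm_le_bound _ (Real.sqrt_nonneg _) fun x => ?_
  have hrow_sq : ∀ i, ‖∑ j, A i j * x j‖ ^ 2 ≤ r * ∑ j, ‖A i j‖ * ‖x j‖ ^ 2 := fun i =>
    calc ‖∑ j, A i j * x j‖ ^ 2 ≤ (∑ j, ‖A i j‖ * ‖x j‖) ^ 2 := by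
          gcongr; exact (norm_sum_le _ _).trans_eq (by simp [norm_mul])
      _ ≤ (∑ j, ‖A i j‖) * ∑ j, ‖A i j‖ * ‖x j‖ ^ 2 :=
          sum_sq_le_sum_mul_sum_of_sq_le_mul _ (fun _ _ => norm_nonneg _)
            (fun _ _ => by positivity) (fun _ _ => le_of_eq (by ring))
      _ ≤ r * ∑ j, ‖A i j‖ * ‖x j‖ ^ 2 := by gcongr; exact hrow i
  have hsq : ∑ i, ‖∑ j, A i j * x j‖ ^ 2 ≤ r * c * ∑ j, ‖x j‖ ^ 2 :=
    calc ∑ i, ‖∑ j, A i j * x j‖ ^ 2 ≤ ∑ i, r * ∑ j, ‖A i j‖ * ‖x j‖ ^ 2 :=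
          sum_le_sum fun i _ => hrow_sq i
      _ = r * ∑ j, (∑ i, ‖A i j‖) * ‖x j‖ ^ 2 := by
          rw [← mul_sum, sum_comm]; simp_rw [sum_mul]
      _ ≤ r * ∑ j, c * ‖x j‖ ^ 2 := by gcongr with j; exact hcol j
      _ = r * c * ∑ j, ‖x j‖ ^ 2 := by rw [← mul_sum, mul_assoc]
  rw [EuclideanSpace.norm_eq, EuclideanSpace.norm_eq, ← Real.sqrt_mul' _ (by positivity)]
  exact Real.sqrt_le_sqrt hsq

theorem norm_pow_succ_apply_le_of_pow_succ_apply_eq_zero {B S : Matrix n n 𝕜} {r : ℝ}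
    (hB : ‖B‖ ≤ r) (hS : ‖S‖ ≤ r) (k : ℕ) {i j : n} (h : (S ^ (k + 1)) i j = 0) :
    ‖(B ^ (k + 1)) i j‖ ≤ (k + 1) * ‖B - S‖ * r ^ k :=
  calc ‖(B ^ (k + 1)) i j‖ = ‖(B ^ (k + 1) - S ^ (k + 1)) i j‖ := by rw [sub_apply, h, sub_zero]
    _ ≤ ‖B ^ (k + 1) - S ^ (k + 1)‖ := norm_entry_le_l2_opNorm _ i j
    _ ≤ (k + 1) * ‖B - S‖ * r ^ k := norm_pow_succ_sub_pow_succ_le hB hS k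

end Matrix

def finDist {N : ℕ} (p q : Fin N) : ℝ := |((p : ℕ) : ℝ) - ((q : ℕ) : ℝ)|

theorem finDist_nonneg {N : ℕ} (p q : Fin N) : 0 ≤ finDist p q := abs_nonneg _

theorem finDist_comm {N : ℕ} (p q : Fin N) : finDist p q = finDist q p := abs_sub_comm _ _

theorem finDist_triangle {N : ℕ} (p q r : Fin N) : finDist p r ≤ finDist p q + finDist q r :=
  abs_sub_le _ _ _

theorem l2OpNorm_eq_norm {N : ℕ} (A : Matrix (Fin N) (Fin N) ℂ) : l2OpNorm A = ‖A‖ := rfl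

section normDecay

variable {N : ℕ} (β : ℝ) (A : Matrix (Fin N) (Fin N) ℂ)

theorem normDecay_nonneg : 0 ≤ normDecay β A :=
  (le_fold_max _).2 (Or.inl le_rfl)

theorem norm_apply_mul_le_normDecay (i j : Fin N) :
    ‖A i j‖ * (1 + finDist i j) ^ β ≤ normDecay β A :=
  (le_fold_max _).2 (Or.inr ⟨(i, j), mem_univ _, le_rfl⟩)

theorem normDecay_le {c : ℝ} (hc : 0 ≤ c) (h : ∀ i j, ‖A i j‖ * (1 + finDist i j) ^ β ≤ c) :
    normDecay β A ≤ c :=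
  (fold_max_le _).2 ⟨hc, fun p _ => h p.1 p.2⟩

end normDecay

noncomputable def decaySum (s : ℝ) : ℝ := ∑' z : ℤ, (1 + |(z : ℝ)|) ^ (-s)

theorem decaySum_nonneg (s : ℝ) : 0 ≤ decaySum s :=
  tsum_nonneg fun _ => by positivity

theorem summable_one_add_abs_rpow_neg {s : ℝ} (hs : 1 < s) :
    Summable fun z : ℤ => (1 + |(z : ℝ)|) ^ (-s) := by
  refine ((Real.summable_one_div_int_add_rpow (1 / 2) s).2 hs).of_nonneg_of_le
    (fun _ => by positivity) fun z => ?_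
  have hz : 0 < |(z : ℝ) + 1 / 2| := abs_pos.2 fun h => by
    have : 2 * z + 1 = 0 := by exact_mod_cast (by linarith : 2 * (z : ℝ) + 1 = 0)
    omega
  rw [Real.rpow_neg (by positivity), one_div]
  gcongr
  calc |(z : ℝ) + 1 / 2| ≤ |(z : ℝ)| + |1 / 2| := abs_add_le _ _
    _ ≤ 1 + |(z : ℝ)| := by norm_num; linarith

theorem sum_one_add_finDist_rpow_neg_le {N : ℕ} {s : ℝ} (hs : 1 < s) (p : Fin N) :
    ∑ q, (1 + finDist p q) ^ (-s) ≤ decaySum s := by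
  have hinj : Function.Injective fun q : Fin N => (p : ℤ) - (q : ℤ) := fun q q' h => by
    simp only [sub_right_inj, Nat.cast_inj] at h
    exact Fin.ext h
  calc ∑ q, (1 + finDist p q) ^ (-s)
      = ∑' q : Fin N, (1 + |(((p : ℤ) - (q : ℤ) : ℤ) : ℝ)|) ^ (-s) := by
        rw [tsum_fintype]; simp [finDist]
    _ ≤ decaySum s := tsum_comp_le_tsum_of_inj (summable_one_add_abs_rpow_neg hs)
        (fun _ => by positivity) hinj

section bandPart

variable {N : ℕ} {α : Type*}

noncomputable def bandPart [Zero α] (t : ℝ) (A : Matrix (Fin N) (Fin N) α) :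
    Matrix (Fin N) (Fin N) α :=
  Matrix.of fun p q => if finDist p q < t then A p q else 0

theorem bandPart_apply_eq_zero [Zero α] {t : ℝ} (A : Matrix (Fin N) (Fin N) α) {p q : Fin N}
    (h : t ≤ finDist p q) : bandPart t A p q = 0 :=
  if_neg h.not_gt

theorem bandPart_pow_apply_eq_zero [Semiring α] (t : ℝ) (A : Matrix (Fin N) (Fin N) α) (m : ℕ)
    {i j : Fin N} (h : (m + 1) * t ≤ finDist i j) : (bandPart t A ^ (m + 1)) i j = 0 := by
  induction m generalizing j with
  | zero => simpa using bandPart_apply_eq_zero A (by simpa using h)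
  | succ m ih =>
    rw [pow_succ, Matrix.mul_apply]
    refine sum_eq_zero fun k _ => ?_
    by_cases hik : (m + 1) * t ≤ finDist i k
    · rw [ih hik, zero_mul]
    · have := finDist_triangle i k j
      push_cast at h
      rw [bandPart_apply_eq_zero A (by linarith), mul_zero]

theorem norm_sub_bandPart_apply_le {δ t : ℝ} (ht : 0 ≤ t) (A : Matrix (Fin N) (Fin N) ℂ)
    (p q : Fin N) :
    ‖(A - bandPart t A) p q‖ ≤ normDecay (2 + δ) A / (1 + t) * (1 + finDist p q) ^ (-(1 + δ)) := by
  have hd := finDist_nonneg p q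
  by_cases h : finDist p q < t
  · simp only [Matrix.sub_apply, bandPart, Matrix.of_apply, if_pos h, sub_self, norm_zero]
    have := normDecay_nonneg (2 + δ) A
    positivity
  rw [Matrix.sub_apply, bandPart_apply_eq_zero A (not_lt.1 h), sub_zero]
  have hsplit : (1 + finDist p q) ^ (2 + δ) = (1 + finDist p q) * (1 + finDist p q) ^ (1 + δ) := by
    rw [show (2 : ℝ) + δ = 1 + (1 + δ) by ring, Real.rpow_add (by positivity), Real.rpow_one]
  rw [Real.rpow_neg (by positivity), ← div_eq_mul_inv, div_div, le_div_iff₀ (by positivity)]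
  calc ‖A p q‖ * ((1 + t) * (1 + finDist p q) ^ (1 + δ))
      ≤ ‖A p q‖ * ((1 + finDist p q) * (1 + finDist p q) ^ (1 + δ)) := by gcongr; linarith
    _ = ‖A p q‖ * (1 + finDist p q) ^ (2 + δ) := by rw [hsplit]
    _ ≤ normDecay (2 + δ) A := norm_apply_mul_le_normDecay _ A p q

end bandPart

theorem norm_sub_bandPart_le {N : ℕ} {δ t : ℝ} (hδ : 0 < δ) (ht : 0 ≤ t)
    (A : Matrix (Fin N) (Fin N) ℂ) :
    ‖A - bandPart t A‖ ≤ normDecay (2 + δ) A / (1 + t) * decaySum (1 + δ) := by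
  set r := normDecay (2 + δ) A / (1 + t) * decaySum (1 + δ)
  have hsum (p : Fin N) :
      ∑ q, normDecay (2 + δ) A / (1 + t) * (1 + finDist p q) ^ (-(1 + δ)) ≤ r := by
    rw [← mul_sum]
    exact mul_le_mul_of_nonneg_left (sum_one_add_finDist_rpow_neg_le (by linarith) p)
      (div_nonneg (normDecay_nonneg _ A) (by linarith))
  have hr : 0 ≤ r := by
    have := normDecay_nonneg (2 + δ) A
    have := decaySum_nonneg (1 + δ)
    have : 0 < 1 + t := by linarith
    positivity
  calc ‖A - bandPart t A‖ ≤ √(r * r) :=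
        Matrix.l2_opNorm_le_sqrt_of_sum_norm_le _
          (fun p => (sum_le_sum fun q _ => norm_sub_bandPart_apply_le ht A p q).trans (hsum p))
          (fun q => (sum_le_sum fun p _ => (norm_sub_bandPart_apply_le ht A p q).trans_eq
            (by rw [finDist_comm])).trans (hsum q))
    _ = r := Real.sqrt_mul_self hr

theorem norm_pow_succ_apply_mul_one_add_finDist_le {N : ℕ} {δ : ℝ} (hδ : 0 < δ) {B : Matrix (Fin N) (Fin N) ℂ}
    (hB : ‖B‖ < 1) (n : ℕ) (i j : Fin N) :
    ‖(B ^ (n + 1)) i j‖ * (1 + finDist i j) ≤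
      2 * decaySum (1 + δ) * normDecay (2 + δ) B * (1 + (1 - ‖B‖)⁻¹) * ((n : ℝ) + 1) ^ 2 *
        ((1 + ‖B‖) / 2) ^ (n + 1) := by
  set K := decaySum (1 + δ)
  set M := normDecay (2 + δ) B
  set Q := (1 + ‖B‖) / 2 with hQ_def
  set t := finDist i j / (n + 1)
  set S := bandPart t B
  have hK := decaySum_nonneg (1 + δ)
  have hM := normDecay_nonneg (2 + δ) B
  have hd := finDist_nonneg i j
  have hn : (1 : ℝ) ≤ n + 1 := by linarith [n.cast_nonneg (α := ℝ)]
  have hdt : (n + 1) * t = finDist i j := mul_div_cancel₀ _ (by positivity)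
  have hdist : 1 + finDist i j ≤ (n + 1) * (1 + t) := by nlinarith
  have hQ : 1 / 2 ≤ Q := by rw [hQ_def]; linarith [norm_nonneg B]
  have hBQ : ‖B‖ ≤ Q := by rw [hQ_def]; linarith
  have ht : 0 ≤ t := by positivity
  have hε : ‖B - S‖ ≤ M / (1 + t) * K := norm_sub_bandPart_le hδ ht B
  have hvanish : (S ^ (n + 1)) i j = 0 := bandPart_pow_apply_eq_zero t B n hdt.le
  have hy : 0 < (1 - ‖B‖)⁻¹ := inv_pos.2 (by linarith)
  by_cases hsmall : M / (1 + t) * K ≤ (1 - ‖B‖) / 2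
  · have hSQ : ‖S‖ ≤ Q := by linarith [norm_le_norm_add_norm_sub B S]
    have hentry := Matrix.norm_pow_succ_apply_le_of_pow_succ_apply_eq_zero hBQ hSQ n hvanish
    have hQn : Q ^ n ≤ 2 * Q ^ (n + 1) := by
      rw [pow_succ]; nlinarith [pow_nonneg (by linarith : (0 : ℝ) ≤ Q) n]
    calc ‖(B ^ (n + 1)) i j‖ * (1 + finDist i j)
        ≤ ((n + 1) * (M / (1 + t) * K) * Q ^ n) * ((n + 1) * (1 + t)) := by
          gcongr
          exact hentry.trans (by gcongr)
      _ = K * M * (n + 1) ^ 2 * Q ^ n := by field_simp [show 1 + t ≠ 0 by linarith]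
      _ ≤ 2 * K * M * (1 + (1 - ‖B‖)⁻¹) * (n + 1) ^ 2 * Q ^ (n + 1) := by
          calc K * M * (n + 1) ^ 2 * Q ^ n ≤ K * M * (n + 1) ^ 2 * (2 * Q ^ (n + 1)) := by gcongr
            _ = 2 * K * M * 1 * (n + 1) ^ 2 * Q ^ (n + 1) := by ring
            _ ≤ _ := by gcongr; linarith
  · have h1t : 1 + t ≤ 2 * K * M * (1 - ‖B‖)⁻¹ := by
      rw [not_le, div_mul_eq_mul_div, lt_div_iff₀ (by linarith)] at hsmall
      rw [le_mul_inv_iff₀ (by linarith)]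
      linarith
    have hentry : ‖(B ^ (n + 1)) i j‖ ≤ Q ^ (n + 1) :=
      (Matrix.norm_entry_le_l2_opNorm _ i j).trans
        ((norm_pow_le' B n.succ_pos).trans (by gcongr))
    calc ‖(B ^ (n + 1)) i j‖ * (1 + finDist i j)
        ≤ Q ^ (n + 1) * ((n + 1) * (2 * K * M * (1 - ‖B‖)⁻¹)) := by
          gcongr
          exact hdist.trans (by gcongr)
      _ ≤ Q ^ (n + 1) * ((n + 1) ^ 2 * (2 * K * M * (1 + (1 - ‖B‖)⁻¹))) := by
          gcongr
          · nlinarith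
          · linarith
      _ = _ := by ring

/-- For `δ > 0` there are `k ≥ 0` and a polynomial `P` in two variables with
nonnegative coefficients, both depending only on `δ`, such that for every matrix `B` with
`‖B‖ < 1` and every `n ≥ 1`:
`‖Bⁿ‖₁ ≤ P(‖B‖_{2+δ}, (1−‖B‖)⁻¹) · n^k · ((1+‖B‖)/2)ⁿ`. -/
theorem power_normDecay_bound (δ : ℝ) (hδ : 0 < δ) :
    ∃ k : ℝ, 0 ≤ k ∧ ∃ P : MvPolynomial (Fin 2) ℝ, (∀ m, 0 ≤ P.coeff m) ∧
      ∀ (N : ℕ) (B : Matrix (Fin N) (Fin N) ℂ), l2OpNorm B < 1 →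
        ∀ n : ℕ, 1 ≤ n →
          normDecay 1 (B ^ n) ≤
            MvPolynomial.eval (![normDecay (2 + δ) B, (1 - l2OpNorm B)⁻¹]) P *
              (n : ℝ) ^ k * ((1 + l2OpNorm B) / 2) ^ n := by
  set K := decaySum (1 + δ)
  let P : MvPolynomial (Fin 2) ℝ := MvPolynomial.monomial (Finsupp.single 0 1) (2 * K) +
    MvPolynomial.monomial (Finsupp.single 0 1 + Finsupp.single 1 1) (2 * K)
  have hP : ∀ x y, MvPolynomial.eval ![x, y] P = 2 * K * x * (1 + y) := fun x y => by
    simp [P, MvPolynomial.eval_monomial, Finsupp.prod_single_index]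
    ring
  refine ⟨2, zero_le_two, P, fun m => ?_, fun N B hB n hn => ?_⟩
  · have := decaySum_nonneg (1 + δ)
    simp only [P, MvPolynomial.coeff_add, MvPolynomial.coeff_monomial]
    split_ifs <;> positivity
  obtain ⟨n, rfl⟩ : ∃ m, n = m + 1 := ⟨n - 1, by omega⟩
  rw [l2OpNorm_eq_norm] at hB ⊢
  rw [hP]
  have hy : 0 ≤ (1 - ‖B‖)⁻¹ := inv_nonneg.2 (by linarith)
  have hK := decaySum_nonneg (1 + δ)
  have hM := normDecay_nonneg (2 + δ) B
  refine normDecay_le _ _ (by positivity) fun i j => ?_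
  push_cast
  rw [Real.rpow_one, Real.rpow_two]
  exact norm_pow_succ_apply_mul_one_add_finDist_le hδ hB n i j
end
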